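/- arXiv:2311.02792 — 2 statements merged into one kernel-verified Lean document; each statement's English description precedes it below -/
import Mathlib

section
/- Let Γ be a signed tree on n ≥ 2 vertices with incidence matrix N in which every negative edge has both incidences equal to +1 and every positive edge e = (l,m) has n_{le} = 1, n_{me} = −1. Define H = [h_{ij}] by h_{ij} = (sgn(P_{e_i−j})/n)·|T_h(e_i)| if j ∈ T_t(e_i), h_{ij} = (sgn(P_{e_i−j})/n)·|T_t(e_i)| if j ∈ T_h(e_i) and e_i is negative, and h_{ij} = −(sgn(P_{e_i−j})/n)·|T_t(e_i)| if j ∈ T_h(e_i) and e_i is positive. Then H N = I_{n−1}. -/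
open Matrix BigOperators

/-- A signed graph together with an enumeration of its edges. -/
structure SignedIncidence (n m : ℕ) where
  G : SimpleGraph (Fin n)
  sigma : Fin n → Fin n → ℤ
  sigma_symm : ∀ i j, sigma i j = sigma j i
  sigma_sign : ∀ i j, G.Adj i j → sigma i j = 1 ∨ sigma i j = -1
  ends : Fin m → Fin n × Fin n
  ends_adj : ∀ ℓ, G.Adj (ends ℓ).1 (ends ℓ).2
  ends_inj : Function.Injective fun ℓ => Sym2.mk (ends ℓ).1 (ends ℓ).2
  ends_surj : ∀ e ∈ G.edgeSet, ∃ ℓ, Sym2.mk (ends ℓ).1 (ends ℓ).2 = e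

namespace SignedIncidence

variable {n m : ℕ}

def edge (S : SignedIncidence n m) (ℓ : Fin m) : Sym2 (Fin n) := Sym2.mk (S.ends ℓ).1 (S.ends ℓ).2

/-- `N` is an incidence matrix of the signed graph `S`. -/
def IsIncidence (S : SignedIncidence n m) (N : Matrix (Fin n) (Fin m) ℝ) : Prop :=
  ∀ ℓ : Fin m,
    N (S.ends ℓ).1 ℓ * N (S.ends ℓ).2 ℓ = -((S.sigma (S.ends ℓ).1 (S.ends ℓ).2 : ℤ) : ℝ) ∧
    (N (S.ends ℓ).1 ℓ = 1 ∨ N (S.ends ℓ).1 ℓ = -1) ∧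
    (N (S.ends ℓ).2 ℓ = 1 ∨ N (S.ends ℓ).2 ℓ = -1) ∧
    ∀ k, k ≠ (S.ends ℓ).1 → k ≠ (S.ends ℓ).2 → N k ℓ = 0

/-- The sign of a walk (in the graph or any subgraph): product of edge signs. -/
def walkSign (S : SignedIncidence n m) {G' : SimpleGraph (Fin n)} {i j : Fin n}
    (w : G'.Walk i j) : ℤ :=
  (w.darts.map fun d => S.sigma d.toProd.1 d.toProd.2).prod

/-- A signed graph is balanced if every closed walk has sign `+1`. -/
def Balanced (S : SignedIncidence n m) : Prop :=
  ∀ (i : Fin n) (w : S.G.Walk i i), S.walkSign w = 1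

end SignedIncidence
namespace SignedIncidence

variable {n m : ℕ}

/-- The graph with the edge `ℓ` deleted. -/
def delG (S : SignedIncidence n m) (ℓ : Fin m) : SimpleGraph (Fin n) :=
  S.G.deleteEdges {S.edge ℓ}

/-- The number of vertices of the head component of `Γ \ eℓ`
(the component containing the second end of `eℓ`). -/
noncomputable def headCard (S : SignedIncidence n m) (ℓ : Fin m) : ℕ :=
  {j : Fin n | (S.delG ℓ).Reachable (S.ends ℓ).2 j}.ncard

/-- The number of vertices of the tail component of `Γ \ eℓ`. -/
noncomputable def tailCard (S : SignedIncidence n m) (ℓ : Fin m) : ℕ :=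
  {j : Fin n | (S.delG ℓ).Reachable (S.ends ℓ).1 j}.ncard

end SignedIncidence

/-
Row `ℓ` of `H` is, up to the constant factor of the side, the sign of the path from the nearer
end of `e_ℓ`. For `k ≠ ℓ` both ends of `e_k` lie on the same side of `e_ℓ`, and the two entries
of row `ℓ` at them differ by the factor `σ(e_k)`; this is exactly what makes them cancel against
column `k` of `N`, whose entries satisfy `N_a N_b = -σ(e_k)`. For `k = ℓ` the normalisation of `N`
turns the entry into `(|T_h| + |T_t|) / n = 1`.
-/

namespace SimpleGraph

variable {V : Type*} {G : SimpleGraph V}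

lemma Preconnected.reachable_or_reachable_deleteEdges (hG : G.Preconnected) (x y v : V) :
    (G.deleteEdges {s(x, y)}).Reachable x v ∨ (G.deleteEdges {s(x, y)}).Reachable y v := by
  set G' := G.deleteEdges {s(x, y)}
  have step : ∀ {u c : V}, G.Adj u c →
      G'.Reachable x c ∨ G'.Reachable y c → G'.Reachable x u ∨ G'.Reachable y u := by
    intro u c huc hc
    by_cases he : s(u, c) = s(x, y)
    · rcases Sym2.eq_iff.1 he with ⟨rfl, -⟩ | ⟨rfl, -⟩
      exacts [Or.inl .rfl, Or.inr .rfl]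
    · have hadj : G'.Adj u c := by simp [G', huc, he]
      exact hc.imp (·.trans hadj.reachable.symm) (·.trans hadj.reachable.symm)
  have walk : ∀ {u c : V}, G.Walk u c →
      G'.Reachable x c ∨ G'.Reachable y c → G'.Reachable x u ∨ G'.Reachable y u := by
    intro u c w
    induction w with
    | nil => exact id
    | cons huc _ ih => exact step huc ∘ ih
  obtain ⟨w⟩ := hG v x
  exact walk w (Or.inl .rfl)

lemma Preconnected.ncard_reachable_deleteEdges_add [Finite V] (hG : G.Preconnected) {x y : V}
    (hb : G.IsBridge s(x, y)) :
    {v | (G.deleteEdges {s(x, y)}).Reachable y v}.ncard +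
      {v | (G.deleteEdges {s(x, y)}).Reachable x v}.ncard = Nat.card V := by
  rw [← Set.ncard_union_eq, ← Set.ncard_univ]
  · congr 1
    ext v
    simpa [or_comm] using hG.reachable_or_reachable_deleteEdges x y v
  · exact Set.disjoint_left.2 fun v hy hx => isBridge_iff.1 hb (hx.trans hy.symm)

end SimpleGraph

namespace SignedIncidence

variable {n m : ℕ} (S : SignedIncidence n m)

@[simp]
lemma walkSign_nil {G' : SimpleGraph (Fin n)} (i : Fin n) :
    S.walkSign (SimpleGraph.Walk.nil : G'.Walk i i) = 1 := rfl

lemma walkSign_concat {G' : SimpleGraph (Fin n)} {i j k : Fin n} (w : G'.Walk i j)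
    (h : G'.Adj j k) : S.walkSign (w.concat h) = S.walkSign w * S.sigma j k := by
  simp only [walkSign, SimpleGraph.Walk.darts_concat, List.map_concat, List.prod_concat]

lemma sigma_mul_of_forall_walkSign {G' : SimpleGraph (Fin n)} {f : Fin n → ℝ} {v : Fin n}
    {d c : ℝ} (hf : ∀ j (w : G'.Walk v j), f j = S.walkSign w / d * c) {a b : Fin n}
    (ha : G'.Reachable v a) (hab : G'.Adj a b) : f b = S.sigma a b * f a := by
  obtain ⟨w⟩ := ha
  rw [hf b (w.concat hab), hf a w, walkSign_concat]
  push_cast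
  ring

lemma delG_adj_ends {ℓ k : Fin m} (h : ℓ ≠ k) : (S.delG ℓ).Adj (S.ends k).1 (S.ends k).2 := by
  have : s((S.ends k).1, (S.ends k).2) ≠ S.edge ℓ := fun he => h (S.ends_inj he.symm)
  simpa [delG, S.ends_adj k] using this

lemma reachable_or_reachable_delG (htree : S.G.IsTree) (ℓ : Fin m) (j : Fin n) :
    (S.delG ℓ).Reachable (S.ends ℓ).1 j ∨ (S.delG ℓ).Reachable (S.ends ℓ).2 j :=
  htree.connected.preconnected.reachable_or_reachable_deleteEdges _ _ j

lemma headCard_add_tailCard (htree : S.G.IsTree) (ℓ : Fin m) :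
    S.headCard ℓ + S.tailCard ℓ = n := by
  have := htree.connected.preconnected.ncard_reachable_deleteEdges_add
    (SimpleGraph.isAcyclic_iff_forall_adj_isBridge.1 htree.isAcyclic (S.ends_adj ℓ))
  rwa [Nat.card_fin] at this

variable {S}

lemma IsIncidence.mul_apply {ι : Type*} {N : Matrix (Fin n) (Fin m) ℝ} (hN : S.IsIncidence N)
    (M : Matrix ι (Fin n) ℝ) (i : ι) (k : Fin m) :
    (M * N) i k = M i (S.ends k).1 * N (S.ends k).1 k + M i (S.ends k).2 * N (S.ends k).2 k := by
  rw [Matrix.mul_apply]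
  exact Finset.sum_eq_add_of_mem _ _ (Finset.mem_univ _) (Finset.mem_univ _) (S.ends_adj k).ne
    fun c _ hc => by rw [(hN k).2.2.2 c hc.1 hc.2, mul_zero]

lemma IsIncidence.mul_apply_eq_zero {ι : Type*} {N : Matrix (Fin n) (Fin m) ℝ}
    (hN : S.IsIncidence N) {M : Matrix ι (Fin n) ℝ} {i : ι} {k : Fin m}
    (hM : M i (S.ends k).2 = S.sigma (S.ends k).1 (S.ends k).2 * M i (S.ends k).1) :
    (M * N) i k = 0 := by
  obtain ⟨hprod, -, hb, -⟩ := hN k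
  have hb2 : N (S.ends k).2 k * N (S.ends k).2 k = 1 := by rcases hb with h | h <;> simp [h]
  rw [hN.mul_apply, hM]
  -- `N_a + σ N_b = N_a - N_a N_b N_b = N_a (1 - N_b ^ 2) = 0`
  linear_combination (M i (S.ends k).1 * N (S.ends k).2 k) * hprod -
    (M i (S.ends k).1 * N (S.ends k).1 k) * hb2

end SignedIncidence

theorem tree_HN_eq_id_general {m : ℕ} (S : SignedIncidence (m + 1) m)
    (htree : S.G.IsTree)
    (N : Matrix (Fin (m + 1)) (Fin m) ℝ) (hN : S.IsIncidence N)
    (hnorm : ∀ ℓ : Fin m,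
      (S.sigma (S.ends ℓ).1 (S.ends ℓ).2 = -1 →
        N (S.ends ℓ).1 ℓ = 1 ∧ N (S.ends ℓ).2 ℓ = 1) ∧
      (S.sigma (S.ends ℓ).1 (S.ends ℓ).2 = 1 →
        N (S.ends ℓ).1 ℓ = 1 ∧ N (S.ends ℓ).2 ℓ = -1))
    (Hm : Matrix (Fin m) (Fin (m + 1)) ℝ)
    (hH : ∀ (ℓ : Fin m) (j : Fin (m + 1)),
      (∀ w : (S.delG ℓ).Walk (S.ends ℓ).1 j,
        Hm ℓ j = (S.walkSign w : ℝ) / (m + 1) * (S.headCard ℓ : ℝ)) ∧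
      (∀ w : (S.delG ℓ).Walk (S.ends ℓ).2 j,
        Hm ℓ j = (S.walkSign w : ℝ) / (m + 1) *
          (if S.sigma (S.ends ℓ).1 (S.ends ℓ).2 = -1
            then (S.tailCard ℓ : ℝ) else -(S.tailCard ℓ : ℝ)))) :
    Hm * N = 1 := by
  ext ℓ k
  obtain rfl | hℓk := eq_or_ne ℓ k
  · have ha := (hH ℓ _).1 .nil
    have hb := (hH ℓ _).2 .nil
    have hcard : (S.headCard ℓ : ℝ) + S.tailCard ℓ = m + 1 := by
      exact_mod_cast S.headCard_add_tailCard htree ℓ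
    rw [hN.mul_apply, ha, hb, one_apply_eq]
    simp only [SignedIncidence.walkSign_nil, Int.cast_one]
    rcases S.sigma_sign _ _ (S.ends_adj ℓ) with hσ | hσ
    · obtain ⟨hNa, hNb⟩ := (hnorm ℓ).2 hσ
      rw [hNa, hNb, if_neg (by rw [hσ]; decide)]
      field_simp
      linarith
    · obtain ⟨hNa, hNb⟩ := (hnorm ℓ).1 hσ
      rw [hNa, hNb, if_pos hσ]
      field_simp
      linarith
  · rw [one_apply_ne hℓk]
    refine hN.mul_apply_eq_zero ?_
    rcases S.reachable_or_reachable_delG htree ℓ (S.ends k).1 with hr | hr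
    · exact S.sigma_mul_of_forall_walkSign (fun j => (hH ℓ j).1) hr (S.delG_adj_ends hℓk)
    · exact S.sigma_mul_of_forall_walkSign (fun j => (hH ℓ j).2) hr (S.delG_adj_ends hℓk)

theorem tree_HN_eq_id {m : ℕ} (hm : 1 ≤ m) (S : SignedIncidence (m + 1) m)
    (htree : S.G.IsTree)
    (N : Matrix (Fin (m + 1)) (Fin m) ℝ) (hN : S.IsIncidence N)
    (hnorm : ∀ ℓ : Fin m,
      (S.sigma (S.ends ℓ).1 (S.ends ℓ).2 = -1 →
        N (S.ends ℓ).1 ℓ = 1 ∧ N (S.ends ℓ).2 ℓ = 1) ∧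
      (S.sigma (S.ends ℓ).1 (S.ends ℓ).2 = 1 →
        N (S.ends ℓ).1 ℓ = 1 ∧ N (S.ends ℓ).2 ℓ = -1))
    (Hm : Matrix (Fin m) (Fin (m + 1)) ℝ)
    (hH : ∀ (ℓ : Fin m) (j : Fin (m + 1)),
      (∀ w : (S.delG ℓ).Walk (S.ends ℓ).1 j,
        Hm ℓ j = (S.walkSign w : ℝ) / (m + 1) * (S.headCard ℓ : ℝ)) ∧
      (∀ w : (S.delG ℓ).Walk (S.ends ℓ).2 j,
        Hm ℓ j = (S.walkSign w : ℝ) / (m + 1) *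
          (if S.sigma (S.ends ℓ).1 (S.ends ℓ).2 = -1
            then (S.tailCard ℓ : ℝ) else -(S.tailCard ℓ : ℝ)))) :
    Hm * N = 1 :=
  tree_HN_eq_id_general S htree N hN hnorm Hm hH
end

section
/- Let Γ be a balanced connected signed graph with Laplacian L = N Nᵀ. Then the Moore-Penrose inverse satisfies L† = (N†)ᵀ N†, and for all vertices i, j: ℓ†_{ii} + ℓ†_{jj} − 2·sgn(P_{i−j})·ℓ†_{ij} equals the effective-resistance-type quantity determined by N† (in particular L† L = L L† = I − (1/n)S, where S is the path sign matrix). -/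
open Matrix BigOperators

/-- `X` is a Moore-Penrose inverse of `A`. -/
def IsMoorePenrose {p q : ℕ} (A : Matrix (Fin p) (Fin q) ℝ) (X : Matrix (Fin q) (Fin p) ℝ) : Prop :=
  A * X * A = A ∧ X * A * X = X ∧ (A * X)ᵀ = A * X ∧ (X * A)ᵀ = X * A


/-! A vector `u` lies in `ker Nᵀ` iff `u b = σ(a, b) u a` along every edge. In a connected graph
such a `u` is determined by its value at one vertex `i₀` through path signs, so `ker Nᵀ` is
spanned by the row `s = S i₀` of the path sign matrix, and `S = s sᵀ` with `s ⬝ s = n`. Hence the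
orthogonal projection `N N†` onto `sᗮ` is `I - (1/n) S`. The matrix `N†ᵀ N†` satisfies the four
Penrose equations for `L = N Nᵀ`, so it is `L†`, and `L L† = L† L = N N†`. The last identity is
the expansion of `‖N† (eᵢ - Sᵢⱼ eⱼ)‖²` using `Sᵢⱼ² = 1`. -/

namespace IsMoorePenrose

variable {p q : ℕ} {A : Matrix (Fin p) (Fin q) ℝ} {X : Matrix (Fin q) (Fin p) ℝ}

theorem unique {X' : Matrix (Fin q) (Fin p) ℝ} (hX : IsMoorePenrose A X)
    (hX' : IsMoorePenrose A X') : X = X' := by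
  obtain ⟨a, b, c, d⟩ := hX
  obtain ⟨a', b', c', d'⟩ := hX'
  have hAX : A * X = A * X' :=
    calc A * X = (A * X')ᵀ * (A * X)ᵀ := by rw [c, c', ← Matrix.mul_assoc, a']
      _ = A * X' := by rw [← transpose_mul, ← Matrix.mul_assoc, a, c']
  have hXA : X * A = X' * A :=
    calc X * A = (X * A)ᵀ * (X' * A)ᵀ := by rw [d, d', Matrix.mul_assoc, ← Matrix.mul_assoc A, a']
      _ = X' * A := by rw [← transpose_mul, Matrix.mul_assoc, ← Matrix.mul_assoc A, a, d']
  calc X = X * A * X' := by rw [Matrix.mul_assoc, ← hAX, ← Matrix.mul_assoc, b]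
    _ = X' := by rw [hXA, b']

theorem transpose_mul_mul_self (hX : IsMoorePenrose A X) : Aᵀ * (A * X) = Aᵀ := by
  conv_lhs => rw [← hX.2.2.1, ← transpose_mul, hX.1]

theorem mul_transpose_mul_transpose_mul (hX : IsMoorePenrose A X) :
    A * Aᵀ * (Xᵀ * X) = A * X := by
  rw [Matrix.mul_assoc, ← Matrix.mul_assoc Aᵀ, ← transpose_mul, hX.2.2.2, ← Matrix.mul_assoc,
    ← Matrix.mul_assoc, hX.1]

theorem transpose_mul_mul_mul_transpose (hX : IsMoorePenrose A X) :
    Xᵀ * X * (A * Aᵀ) = A * X := by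
  rw [← hX.2.2.1, ← hX.mul_transpose_mul_transpose_mul, transpose_mul, transpose_mul,
    transpose_mul, transpose_transpose, transpose_transpose]

theorem mul_transpose (hX : IsMoorePenrose A X) : IsMoorePenrose (A * Aᵀ) (Xᵀ * X) := by
  refine ⟨?_, ?_, ?_, ?_⟩
  · rw [hX.mul_transpose_mul_transpose_mul, ← Matrix.mul_assoc, hX.1]
  · rw [hX.transpose_mul_mul_mul_transpose, ← hX.2.2.1, transpose_mul, Matrix.mul_assoc,
      ← Matrix.mul_assoc Aᵀ, ← transpose_mul, hX.2.2.2, hX.2.1]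
  · rw [hX.mul_transpose_mul_transpose_mul, hX.2.2.1]
  · rw [hX.transpose_mul_mul_mul_transpose, hX.2.2.1]

/-- `w - A X w` lies in `ker Aᵀ = ℝ ∙ v` and is orthogonal to the range of `A X`, which pins down
its multiple of `v`; for `v = 0` the formula still holds because `0⁻¹ = 0`. -/
theorem mul_eq_one_sub_of_ker_transpose {v : Fin p → ℝ} (hX : IsMoorePenrose A X)
    (hker : LinearMap.ker Aᵀ.mulVecLin = ℝ ∙ v) :
    A * X = 1 - (v ⬝ᵥ v)⁻¹ • vecMulVec v v := by
  have hv : Aᵀ *ᵥ v = 0 := hker.ge (Submodule.mem_span_singleton_self v)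
  have hPv : (A * X) *ᵥ v = 0 := by
    rw [← hX.2.2.1, transpose_mul, ← mulVec_mulVec, hv, mulVec_zero]
  rw [ext_iff_mulVec]
  intro w
  obtain ⟨c, hc⟩ : ∃ c : ℝ, c • v = w - (A * X) *ᵥ w := by
    rw [← Submodule.mem_span_singleton, ← hker, LinearMap.mem_ker, mulVecLin_apply,
      mulVec_sub, mulVec_mulVec, hX.transpose_mul_mul_self, sub_self]
  have hdot : c * (v ⬝ᵥ v) = v ⬝ᵥ w := by
    rw [← smul_eq_mul, ← dotProduct_smul, hc, dotProduct_sub, dotProduct_mulVec,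
      ← mulVec_transpose, hX.2.2.1, hPv, zero_dotProduct, sub_zero]
  have hproj : (vecMulVec v v) *ᵥ w = (v ⬝ᵥ w) • v := by
    ext i
    simp [mulVec, dotProduct, vecMulVec_apply, Finset.mul_sum, mul_comm, mul_left_comm]
  rw [sub_mulVec, smul_mulVec, hproj, one_mulVec, smul_smul, ← hdot]
  rcases eq_or_ne v 0 with rfl | hv0
  · rw [smul_zero, eq_comm, sub_eq_zero] at hc
    simpa using hc.symm
  · rw [mul_comm c, ← mul_assoc, inv_mul_cancel₀ (by simpa using hv0), one_mul, hc]
    abel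

end IsMoorePenrose

theorem Matrix.sum_sub_mul_sq_eq {ι κ R : Type*} [Fintype ι] [CommRing R] (X : Matrix ι κ R)
    (s : R) (i j : κ) :
    ∑ k, (X k i - s * X k j) ^ 2 = (Xᵀ * X) i i + s ^ 2 * (Xᵀ * X) j j - 2 * s * (Xᵀ * X) i j := by
  simp only [mul_apply, transpose_apply, Finset.mul_sum, ← Finset.sum_add_distrib,
    ← Finset.sum_sub_distrib]
  exact Finset.sum_congr rfl fun k _ => by ring

namespace SignedIncidence

open SimpleGraph

variable {n m : ℕ} (S : SignedIncidence n m)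

section walkSign

variable {G' : SimpleGraph (Fin n)}

@[simp]
theorem walkSign_nil_s15 {a : Fin n} : S.walkSign (Walk.nil : G'.Walk a a) = 1 := by
  simp [walkSign]

@[simp]
theorem walkSign_cons {a b c : Fin n} (h : G'.Adj a b) (w : G'.Walk b c) :
    S.walkSign (Walk.cons h w) = S.sigma a b * S.walkSign w := by
  simp [walkSign]

theorem walkSign_append {a b c : Fin n} (w₁ : G'.Walk a b) (w₂ : G'.Walk b c) :
    S.walkSign (w₁.append w₂) = S.walkSign w₁ * S.walkSign w₂ := by
  simp [walkSign, Walk.darts_append]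

theorem walkSign_reverse {a b : Fin n} (w : G'.Walk a b) : S.walkSign w.reverse = S.walkSign w := by
  have hsymm : (fun d : G'.Dart => S.sigma d.toProd.1 d.toProd.2) ∘ Dart.symm =
      fun d => S.sigma d.toProd.1 d.toProd.2 := by
    funext d
    simp [Dart.symm, S.sigma_symm]
  simp [walkSign, Walk.darts_reverse, List.map_reverse, hsymm, List.prod_reverse]

end walkSign

def IsPathSignMatrix (Smat : Matrix (Fin n) (Fin n) ℝ) : Prop :=
  ∀ (i j : Fin n) (w : S.G.Walk i j), Smat i j = (S.walkSign w : ℝ)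

variable {S} {N : Matrix (Fin n) (Fin m) ℝ}

theorem IsIncidence.transpose_mulVec_apply (hN : S.IsIncidence N) (u : Fin n → ℝ) (ℓ : Fin m) :
    (Nᵀ *ᵥ u) ℓ = N (S.ends ℓ).1 ℓ * u (S.ends ℓ).1 + N (S.ends ℓ).2 ℓ * u (S.ends ℓ).2 := by
  rw [mulVec_transpose]
  simp only [vecMul, dotProduct]
  rw [Fintype.sum_eq_add _ _ (S.ends_adj ℓ).ne fun k hk => by rw [(hN ℓ).2.2.2 k hk.1 hk.2, mul_zero]]
  ring

theorem IsIncidence.transpose_mulVec_apply_eq_zero_iff (hN : S.IsIncidence N) (u : Fin n → ℝ)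
    (ℓ : Fin m) :
    (Nᵀ *ᵥ u) ℓ = 0 ↔ u (S.ends ℓ).2 = S.sigma (S.ends ℓ).1 (S.ends ℓ).2 * u (S.ends ℓ).1 := by
  obtain ⟨hprod, ha, hb, -⟩ := hN ℓ
  have ha2 : N (S.ends ℓ).1 ℓ * N (S.ends ℓ).1 ℓ = 1 := by rcases ha with h | h <;> simp [h]
  have hb2 : N (S.ends ℓ).2 ℓ * N (S.ends ℓ).2 ℓ = 1 := by rcases hb with h | h <;> simp [h]
  rw [hN.transpose_mulVec_apply]
  constructor
  · intro h
    linear_combination N (S.ends ℓ).2 ℓ * h - u (S.ends ℓ).2 * hb2 - u (S.ends ℓ).1 * hprod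
  · intro h
    linear_combination N (S.ends ℓ).2 ℓ * h + u (S.ends ℓ).1 * N (S.ends ℓ).2 ℓ * hprod -
      u (S.ends ℓ).1 * N (S.ends ℓ).1 ℓ * hb2

theorem IsIncidence.transpose_mulVec_eq_zero_iff (hN : S.IsIncidence N) (u : Fin n → ℝ) :
    Nᵀ *ᵥ u = 0 ↔ ∀ a b, S.G.Adj a b → u b = S.sigma a b * u a := by
  constructor
  · intro hu a b hab
    obtain ⟨ℓ, hℓ⟩ := S.ends_surj s(a, b) hab
    have hedge := (hN.transpose_mulVec_apply_eq_zero_iff u ℓ).mp (congrFun hu ℓ)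
    obtain ⟨ha, hb⟩ | ⟨hb, ha⟩ := Sym2.eq_iff.mp hℓ <;> rw [ha, hb] at hedge
    · exact hedge
    · have hsq : (S.sigma b a : ℝ) * S.sigma b a = 1 := by
        rcases S.sigma_sign b a hab.symm with h | h <;> simp [h]
      rw [hedge, S.sigma_symm, ← mul_assoc, hsq, one_mul]
  · intro h
    ext ℓ
    exact (hN.transpose_mulVec_apply_eq_zero_iff u ℓ).mpr (h _ _ (S.ends_adj ℓ))

theorem apply_eq_walkSign_mul {u : Fin n → ℝ} (hu : ∀ a b, S.G.Adj a b → u b = S.sigma a b * u a)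
    {a b : Fin n} (w : S.G.Walk a b) : u b = S.walkSign w * u a := by
  induction w with
  | nil => simp
  | cons h w ih =>
    rw [ih, hu _ _ h, walkSign_cons]
    push_cast
    ring

namespace IsPathSignMatrix

variable {Smat : Matrix (Fin n) (Fin n) ℝ} (hS : S.IsPathSignMatrix Smat)
include hS

theorem apply_self (i : Fin n) : Smat i i = 1 := by
  simpa using hS i i .nil

theorem apply_eq_mul (hconn : S.G.Connected) (i₀ i j : Fin n) :
    Smat i j = Smat i₀ i * Smat i₀ j := by
  obtain ⟨w₁⟩ := hconn.preconnected i₀ i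
  obtain ⟨w₂⟩ := hconn.preconnected i₀ j
  rw [hS i j (w₁.reverse.append w₂), hS i₀ i w₁, hS i₀ j w₂, walkSign_append, walkSign_reverse]
  push_cast
  rfl

theorem eq_vecMulVec (hconn : S.G.Connected) (i₀ : Fin n) :
    Smat = vecMulVec (Smat i₀) (Smat i₀) :=
  ext fun i j => hS.apply_eq_mul hconn i₀ i j

theorem mul_self_apply (hconn : S.G.Connected) (i j : Fin n) : Smat i j * Smat i j = 1 := by
  rw [← hS.apply_eq_mul hconn i j j, hS.apply_self]

theorem dotProduct_self_row (hconn : S.G.Connected) (i₀ : Fin n) :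
    Smat i₀ ⬝ᵥ Smat i₀ = n := by
  simp [dotProduct, hS.mul_self_apply hconn]

theorem ker_transpose_eq_span (hconn : S.G.Connected) (hN : S.IsIncidence N) (i₀ : Fin n) :
    LinearMap.ker Nᵀ.mulVecLin = ℝ ∙ Smat i₀ := by
  have hrow : ∀ a b, S.G.Adj a b → Smat i₀ b = S.sigma a b * Smat i₀ a := by
    intro a b hab
    obtain ⟨w⟩ := hconn.preconnected i₀ a
    rw [hS i₀ b (w.append (.cons hab .nil)), hS i₀ a w, walkSign_append, walkSign_cons,
      walkSign_nil_s15]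
    push_cast
    ring
  ext u
  rw [LinearMap.mem_ker, mulVecLin_apply, hN.transpose_mulVec_eq_zero_iff,
    Submodule.mem_span_singleton]
  constructor
  · intro hu
    refine ⟨u i₀, funext fun i => ?_⟩
    obtain ⟨w⟩ := hconn.preconnected i₀ i
    rw [Pi.smul_apply, smul_eq_mul, hS i₀ i w, S.apply_eq_walkSign_mul hu w, mul_comm]
  · rintro ⟨c, rfl⟩ a b hab
    simp only [Pi.smul_apply, smul_eq_mul, hrow a b hab]
    ring

end IsPathSignMatrix

end SignedIncidence

theorem balanced_laplacian_MP_general {n m : ℕ} (S : SignedIncidence n m)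
    (hconn : S.G.Connected)
    (N : Matrix (Fin n) (Fin m) ℝ) (hN : S.IsIncidence N)
    (L : Matrix (Fin n) (Fin n) ℝ) (hL : L = N * Nᵀ)
    (X : Matrix (Fin m) (Fin n) ℝ) (hX : IsMoorePenrose N X)
    (Y : Matrix (Fin n) (Fin n) ℝ) (hY : IsMoorePenrose L Y)
    (Smat : Matrix (Fin n) (Fin n) ℝ)
    (hSpath : ∀ (i j : Fin n) (w : S.G.Walk i j), Smat i j = (S.walkSign w : ℝ)) :
    Y = Xᵀ * X ∧
    L * Y = 1 - ((n : ℝ)⁻¹) • Smat ∧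
    Y * L = 1 - ((n : ℝ)⁻¹) • Smat ∧
    ∀ i j : Fin n,
      Y i i + Y j j - 2 * Smat i j * Y i j =
        ∑ k : Fin m, (X k i - Smat i j * X k j) ^ 2 := by
  obtain ⟨i₀⟩ := hconn.nonempty
  have hS : S.IsPathSignMatrix Smat := hSpath
  have hP : N * X = 1 - (n : ℝ)⁻¹ • Smat := by
    rw [hX.mul_eq_one_sub_of_ker_transpose (hS.ker_transpose_eq_span hconn hN i₀),
      hS.dotProduct_self_row hconn i₀, ← hS.eq_vecMulVec hconn i₀]
  subst hL
  obtain rfl : Y = Xᵀ * X := hY.unique hX.mul_transpose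
  refine ⟨rfl, ?_, ?_, fun i j => ?_⟩
  · rw [hX.mul_transpose_mul_transpose_mul, hP]
  · rw [hX.transpose_mul_mul_mul_transpose, hP]
  · rw [sum_sub_mul_sq_eq, sq, hS.mul_self_apply hconn, one_mul]

theorem balanced_laplacian_MP {n m : ℕ} (hn : 2 ≤ n) (S : SignedIncidence n m)
    (hconn : S.G.Connected) (hbal : S.Balanced)
    (N : Matrix (Fin n) (Fin m) ℝ) (hN : S.IsIncidence N)
    (L : Matrix (Fin n) (Fin n) ℝ) (hL : L = N * Nᵀ)
    (X : Matrix (Fin m) (Fin n) ℝ) (hX : IsMoorePenrose N X)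
    (Y : Matrix (Fin n) (Fin n) ℝ) (hY : IsMoorePenrose L Y)
    (Smat : Matrix (Fin n) (Fin n) ℝ)
    (hSdiag : ∀ i, Smat i i = 1)
    (hSpath : ∀ (i j : Fin n) (w : S.G.Walk i j), Smat i j = (S.walkSign w : ℝ)) :
    Y = Xᵀ * X ∧
    L * Y = 1 - ((n : ℝ)⁻¹) • Smat ∧
    Y * L = 1 - ((n : ℝ)⁻¹) • Smat ∧
    ∀ i j : Fin n,
      Y i i + Y j j - 2 * Smat i j * Y i j =
        ∑ k : Fin m, (X k i - Smat i j * X k j) ^ 2 :=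
  balanced_laplacian_MP_general S hconn N hN L hL X hX Y hY Smat hSpath
end
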